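/- Let K be a nonempty compact metric space and f ∈ C(K, ℝ). A finite signed (real-valued, σ-additive) Borel measure μ on K satisfies the subgradient inequality max_K g − max_K f ≥ ∫_K (g − f) dμ for all g ∈ C(K, ℝ) if and only if μ is a Borel probability measure on K with μ(K_f) = 1, where K_f = {t ∈ K : f(t) = max_K f} is the arg-maximum set of f. (Via the Riesz–Markov representation of continuous linear functionals on C(K, ℝ) by signed Borel measures, this states that the subdifferential of the maximum functional m(f) = max_K f at f coincides with the set of all probability measures on Argmax_K f.) -/

import Mathlib

/-!
Testing the subgradient inequality with `g = f - h` for continuous `0 ≤ h ≤ 1` gives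
`∫ h dμ⁻ ≤ ∫ h dμ⁺`. Approximating indicators of closed sets by such `h` and using inner
regularity by closed sets yields `μ⁻ ≤ μ⁺`, so mutual singularity of the Jordan parts forces
`μ⁻ = 0`. For the positive measure `p = μ⁺`, the tests `g = f ± 1` give `p K = 1`, and `g = 0`
gives `∫ f dp ≥ max f`, so the nonnegative function `max f - f` has zero integral and vanishes
`p`-a.e. Conversely, if `p` is a probability measure carried by `Argmax f`, then
`g - f ≤ max g - max f` holds `p`-a.e. and integrates to the subgradient inequality.
-/

open MeasureTheory

/-- The integral of a function against a finite signed Borel measure, defined via the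
Jordan decomposition `μ = μ⁺ - μ⁻`. -/
noncomputable def MeasureTheory.SignedMeasure.sintegral {K : Type*} [MeasurableSpace K]
    (μ : SignedMeasure K) (g : K → ℝ) : ℝ :=
  (∫ t, g t ∂μ.toJordanDecomposition.posPart) -
    (∫ t, g t ∂μ.toJordanDecomposition.negPart)

open Set

namespace MeasureTheory

namespace Measure

variable {X : Type*} [MeasurableSpace X] {μ ν : Measure X}

theorem measure_isClosed_le_of_forall_integral_le [PseudoEMetricSpace X] [OpensMeasurableSpace X]
    [IsFiniteMeasure μ] [IsFiniteMeasure ν]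
    (h : ∀ g : X → ℝ, Continuous g → (∀ x, 0 ≤ g x ∧ g x ≤ 1) → ∫ x, g x ∂μ ≤ ∫ x, g x ∂ν)
    {F : Set X} (hF : IsClosed F) : μ F ≤ ν F := by
  have δ_pos (n : ℕ) : (0 : ℝ) < 1 / (n + 1) := Nat.one_div_pos_of_nat
  have hreal : μ.real F ≤ ν.real F :=
    le_of_tendsto_of_tendsto'
      (tendsto_integral_thickenedIndicator_of_isClosed μ hF δ_pos
        tendsto_one_div_add_atTop_nhds_zero_nat)
      (tendsto_integral_thickenedIndicator_of_isClosed ν hF δ_pos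
        tendsto_one_div_add_atTop_nhds_zero_nat)
      fun n ↦ h _ (by fun_prop) fun x ↦
        ⟨NNReal.coe_nonneg _, NNReal.coe_le_one.2 (thickenedIndicator_le_one _ F x)⟩
  exact (ENNReal.toReal_le_toReal (measure_ne_top μ F) (measure_ne_top ν F)).1 hreal

theorem le_of_forall_isClosed_le [TopologicalSpace X] [IsFiniteMeasure μ] [μ.WeaklyRegular]
    (h : ∀ F, IsClosed F → μ F ≤ ν F) : μ ≤ ν :=
  le_iff.2 fun s hs ↦ by
    rw [hs.measure_eq_iSup_isClosed_of_ne_top (measure_ne_top μ s)]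
    exact iSup₂_le fun F hFs ↦ iSup_le fun hF ↦ (h F hF).trans (measure_mono hFs)

theorem le_of_forall_integral_le [PseudoEMetricSpace X] [BorelSpace X]
    [IsFiniteMeasure μ] [IsFiniteMeasure ν]
    (h : ∀ g : X → ℝ, Continuous g → (∀ x, 0 ≤ g x ∧ g x ≤ 1) → ∫ x, g x ∂μ ≤ ∫ x, g x ∂ν) :
    μ ≤ ν :=
  le_of_forall_isClosed_le fun _ ↦ measure_isClosed_le_of_forall_integral_le h

end Measure

namespace JordanDecomposition

variable {X : Type*} [MeasurableSpace X]

theorem negPart_eq_zero_of_le (j : JordanDecomposition X) (h : j.negPart ≤ j.posPart) :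
    j.negPart = 0 :=
  Measure.eq_zero_of_absolutelyContinuous_of_mutuallySingular
    (Measure.absolutelyContinuous_of_le h) j.mutuallySingular.symm

end JordanDecomposition

namespace SignedMeasure

variable {X : Type*} [MeasurableSpace X] (μ : SignedMeasure X)

theorem nonneg_iff_negPart_eq_zero :
    (∀ A, MeasurableSet A → 0 ≤ μ A) ↔ μ.toJordanDecomposition.negPart = 0 := by
  refine ⟨fun h ↦ μ.toJordanDecomposition.negPart_eq_zero_of_le <| Measure.le_iff.2 fun A hA ↦ ?_,
    fun h A hA ↦ ?_⟩
  · have hμA := h A hA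
    rw [μ.apply_eq_posPart_real_sub_negPart_real hA, sub_nonneg] at hμA
    exact (ENNReal.toReal_le_toReal (measure_ne_top _ A) (measure_ne_top _ A)).1 hμA
  · rw [μ.apply_eq_posPart_real_sub_negPart_real hA, h]
    simp

theorem negPart_eq_zero_of_forall_sintegral_nonneg [PseudoEMetricSpace X] [BorelSpace X]
    (h : ∀ g : X → ℝ, Continuous g → (∀ x, 0 ≤ g x ∧ g x ≤ 1) → 0 ≤ μ.sintegral g) :
    μ.toJordanDecomposition.negPart = 0 :=
  μ.toJordanDecomposition.negPart_eq_zero_of_le <| Measure.le_of_forall_integral_le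
    fun g hg hg01 ↦ sub_nonneg.1 (h g hg hg01)

theorem sintegral_neg (g : X → ℝ) : μ.sintegral (fun x ↦ -g x) = -μ.sintegral g := by
  simp only [sintegral, integral_neg]
  ring

theorem sintegral_of_negPart_eq_zero (h : μ.toJordanDecomposition.negPart = 0) (g : X → ℝ) :
    μ.sintegral g = ∫ x, g x ∂μ.toJordanDecomposition.posPart := by
  simp [sintegral, h]

theorem apply_of_negPart_eq_zero (h : μ.toJordanDecomposition.negPart = 0) {A : Set X}
    (hA : MeasurableSet A) : μ A = μ.toJordanDecomposition.posPart.real A := by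
  simp [μ.apply_eq_posPart_real_sub_negPart_real hA, h]

end SignedMeasure

theorem isProbabilityMeasure_and_ae_mem_iff {X : Type*} [MeasurableSpace X] {p : Measure X}
    [IsFiniteMeasure p] {s : Set X} (hs : NullMeasurableSet s p) :
    (IsProbabilityMeasure p ∧ ∀ᵐ x ∂p, x ∈ s) ↔ p.real univ = 1 ∧ p.real s = 1 := by
  rw [isProbabilityMeasure_iff_real, ae_mem_iff_measure_eq hs, measureReal_def, measureReal_def]
  constructor
  · rintro ⟨h1, hs1⟩
    exact ⟨h1, hs1 ▸ h1⟩
  · rintro ⟨h1, hs1⟩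
    exact ⟨h1, (ENNReal.toReal_eq_toReal_iff' (measure_ne_top p s) (measure_ne_top p univ)).1
      (hs1.trans h1.symm)⟩

end MeasureTheory

namespace ContinuousMap

variable {K : Type*} [TopologicalSpace K] [CompactSpace K]

theorem bddAbove_range {α : Type*} [TopologicalSpace α] [LinearOrder α] [ClosedIciTopology α]
    [Nonempty α] (g : C(K, α)) : BddAbove (range g) :=
  (isCompact_range g.continuous).bddAbove

theorem iSup_add_const [Nonempty K] (g : C(K, ℝ)) (c : ℝ) :
    (⨆ t, g t + c) = (⨆ t, g t) + c :=
  ((OrderIso.addRight c).map_ciSup g.bddAbove_range).symm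

theorem integrable [MeasurableSpace K] [OpensMeasurableSpace K] (g : C(K, ℝ)) (p : Measure K)
    [IsFiniteMeasure p] : Integrable g p :=
  g.continuous.integrable_of_hasCompactSupport (.of_compactSpace _)

end ContinuousMap

section Subgradient

open MeasureTheory ContinuousMap

variable {K : Type*} [TopologicalSpace K] [CompactSpace K] [MeasurableSpace K]
  (f : C(K, ℝ)) (p : Measure K)

theorem isProbabilityMeasure_of_forall_integral_sub_le_iSup_sub [Nonempty K]
    (H : ∀ g : C(K, ℝ), ∫ t, g t - f t ∂p ≤ (⨆ t, g t) - ⨆ t, f t) : IsProbabilityMeasure p := by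
  have shift (c : ℝ) : c * p.real univ ≤ c := by
    simpa [iSup_add_const, mul_comm] using H (f + const K c)
  exact isProbabilityMeasure_iff_real.2 <| by linarith [shift 1, shift (-1)]

theorem ae_eq_iSup_of_forall_integral_sub_le_iSup_sub [Nonempty K] [OpensMeasurableSpace K]
    (H : ∀ g : C(K, ℝ), ∫ t, g t - f t ∂p ≤ (⨆ t, g t) - ⨆ t, f t) :
    ∀ᵐ t ∂p, f t = ⨆ s, f s := by
  have := isProbabilityMeasure_of_forall_integral_sub_le_iSup_sub f p H
  have hle : ∀ t, f t ≤ ⨆ s, f s := le_ciSup f.bddAbove_range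
  have hgap : ∫ t, (⨆ s, f s) - f t ∂p = 0 := by
    have h0 := H 0
    simp only [ContinuousMap.zero_apply, zero_sub, integral_neg, ciSup_const] at h0
    have hmean : ∫ t, f t ∂p ≤ ⨆ s, f s := by
      simpa using integral_mono (f.integrable p) (integrable_const _) hle
    rw [integral_sub (integrable_const _) (f.integrable p), integral_const, probReal_univ, one_smul]
    linarith
  filter_upwards [(integral_eq_zero_iff_of_nonneg (fun t ↦ sub_nonneg.2 (hle t))
    ((integrable_const _).sub (f.integrable p))).1 hgap] with t ht
  linarith [show (⨆ s, f s) - f t = 0 from ht]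

theorem integral_sub_le_iSup_sub_of_ae_eq_iSup [OpensMeasurableSpace K] [IsProbabilityMeasure p]
    (hf : ∀ᵐ t ∂p, f t = ⨆ s, f s) (g : C(K, ℝ)) :
    ∫ t, g t - f t ∂p ≤ (⨆ t, g t) - ⨆ t, f t := by
  have hle : ∀ᵐ t ∂p, g t - f t ≤ (⨆ t, g t) - ⨆ t, f t := by
    filter_upwards [hf] with t ht
    rw [ht]
    linarith [le_ciSup g.bddAbove_range t]
  simpa using integral_mono_ae ((g - f).integrable p) (integrable_const _) hle

theorem forall_integral_sub_le_iSup_sub_iff [Nonempty K] [OpensMeasurableSpace K] :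
    (∀ g : C(K, ℝ), ∫ t, g t - f t ∂p ≤ (⨆ t, g t) - ⨆ t, f t) ↔
      IsProbabilityMeasure p ∧ ∀ᵐ t ∂p, f t = ⨆ s, f s :=
  ⟨fun H ↦ ⟨isProbabilityMeasure_of_forall_integral_sub_le_iSup_sub f p H,
      ae_eq_iSup_of_forall_integral_sub_le_iSup_sub f p H⟩,
    fun ⟨_, hf⟩ ↦ integral_sub_le_iSup_sub_of_ae_eq_iSup f p hf⟩

end Subgradient

/-- `∂(max)(f) = P(Argmax f)`: a finite signed Borel measure `μ` on a
nonempty compact metric space `K` satisfies the subgradient inequality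
`max g - max f ≥ ∫ (g - f) dμ` for all `g ∈ C(K, ℝ)` if and only if `μ` is a Borel
probability measure concentrated on the arg-maximum set `K_f = {t | f t = max f}`. -/
theorem signedMeasure_subgradient_iff_probability_on_argmax
    {K : Type*} [MetricSpace K] [CompactSpace K] [Nonempty K]
    [MeasurableSpace K] [BorelSpace K]
    (f : C(K, ℝ)) (μ : SignedMeasure K) :
    (∀ g : C(K, ℝ),
        (⨆ t, g t) - (⨆ t, f t) ≥ μ.sintegral (fun t => g t - f t)) ↔
      (∀ A : Set K, MeasurableSet A → 0 ≤ μ A) ∧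
        μ Set.univ = 1 ∧ μ {t | f t = ⨆ s, f s} = 1 := by
  have hargmax : MeasurableSet {t | f t = ⨆ s, f s} :=
    (isClosed_eq f.continuous continuous_const).measurableSet
  have reduce (hν : μ.toJordanDecomposition.negPart = 0) :
      (∀ g : C(K, ℝ), (⨆ t, g t) - (⨆ t, f t) ≥ μ.sintegral (fun t => g t - f t)) ↔
        (∀ A : Set K, MeasurableSet A → 0 ≤ μ A) ∧
          μ Set.univ = 1 ∧ μ {t | f t = ⨆ s, f s} = 1 := by
    simp only [ge_iff_le, μ.sintegral_of_negPart_eq_zero hν, μ.nonneg_iff_negPart_eq_zero, hν,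
      μ.apply_of_negPart_eq_zero hν MeasurableSet.univ, μ.apply_of_negPart_eq_zero hν hargmax,
      true_and]
    rw [← isProbabilityMeasure_and_ae_mem_iff hargmax.nullMeasurableSet]
    exact forall_integral_sub_le_iSup_sub_iff f _
  refine ⟨fun H ↦ (reduce ?_).1 H, fun H ↦ (reduce (μ.nonneg_iff_negPart_eq_zero.1 H.1)).2 H⟩
  refine μ.negPart_eq_zero_of_forall_sintegral_nonneg fun g hg hg01 ↦ ?_
  have hsub := H (f - ⟨g, hg⟩)
  have hmax : (⨆ t, f t - g t) ≤ ⨆ t, f t :=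
    ciSup_mono f.bddAbove_range fun t ↦ sub_le_self _ (hg01 t).1
  simp only [ContinuousMap.sub_apply, ContinuousMap.coe_mk, sub_sub_cancel_left,
    μ.sintegral_neg] at hsub
  linarith
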